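/- arXiv:2411.01350 — 2 statements merged into one kernel-verified Lean document; each statement's English description precedes it below -/
import Mathlib

section
/- Let ψ : ℝ^{K-1} → ℝ be a symmetric function, and define the multiclass loss L : ℝ^K → ℝ^K by L_y(v) = ψ(Υ_y D v) for each y ∈ [K]. Then L is permutation equivariant, i.e., L(S_σ v) = S_σ L(v) for every permutation σ of [K] and every v ∈ ℝ^K. -/
open Matrix

/-- The matrix `D = [-I_{K-1} | 1_{K-1}]`, so `(D v)_i = v_K - v_i`. -/
noncomputable def Dmat (K : ℕ) : Matrix (Fin (K-1)) (Fin K) ℝ :=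
  Matrix.of fun i j => if (j : ℕ) = K - 1 then 1 else if (j : ℕ) = (i : ℕ) then -1 else 0

/-- The matrix label code `Υ_y`: identity for `y = K` (0-indexed: `y = K-1`), otherwise the
identity with the `y`-th column replaced by all `-1`'s. -/
noncomputable def Ups (K : ℕ) (y : Fin K) : Matrix (Fin (K-1)) (Fin (K-1)) ℝ :=
  Matrix.of fun i j =>
    if (y : ℕ) = K - 1 then (if i = j then 1 else 0)
    else if (j : ℕ) = (y : ℕ) then -1 else if i = j then 1 else 0

/-- The permutation matrix `S_σ`, satisfying `(S_σ v)_j = v_{σ(j)}`. -/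
noncomputable def Smat {n : ℕ} (σ : Equiv.Perm (Fin n)) : Matrix (Fin n) (Fin n) ℝ :=
  Matrix.of fun i j => if σ i = j then 1 else 0

lemma sum_two {n : ℕ} (a b : Fin n) (hab : a ≠ b) (g : Fin n → ℝ) (c d : ℝ) :
    ∑ j, (if j = a then c else if j = b then d else 0) * g j = c * g a + d * g b := by
  have : ∀ j : Fin n, (if j = a then c else if j = b then d else 0) * g j
      = (if j = a then c * g j else 0) + (if j = b then d * g j else 0) := by
    intro j
    by_cases h1 : j = a <;> by_cases h2 : j = b <;> simp_all <;> ring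
  rw [Finset.sum_congr rfl fun j _ => this j, Finset.sum_add_distrib,
    Finset.sum_ite_eq' Finset.univ a, Finset.sum_ite_eq' Finset.univ b]
  simp

lemma Smat_mulVec {n : ℕ} (σ : Equiv.Perm (Fin n)) (v : Fin n → ℝ) (j : Fin n) :
    (Smat σ *ᵥ v) j = v (σ j) := by
  simp [Smat, mulVec, dotProduct]

/-- The canonical bijection from `Fin (K-1)` onto the complement of `y`. -/
def mY (K : ℕ) (hK : 2 ≤ K) (y : Fin K) (i : Fin (K-1)) : Fin K :=
  if (i : ℕ) = (y : ℕ) then ⟨K-1, by omega⟩ else ⟨i, by omega⟩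

lemma mY_ne (K : ℕ) (hK : 2 ≤ K) (y : Fin K) (i : Fin (K-1)) : mY K hK y i ≠ y := by
  unfold mY
  split_ifs with h
  · intro he
    have := congrArg Fin.val he
    simp at this
    omega
  · intro he
    have := congrArg Fin.val he
    simp at this
    omega

lemma mY_bij (K : ℕ) (hK : 2 ≤ K) (y : Fin K) :
    Function.Bijective (fun i => (⟨mY K hK y i, mY_ne K hK y i⟩ : {j : Fin K // j ≠ y})) := by
  constructor
  · intro i1 i2 h
    have h' : mY K hK y i1 = mY K hK y i2 := congrArg Subtype.val h
    unfold mY at h'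
    split_ifs at h' with h1 h2 h2 <;>
      (have := congrArg Fin.val h'; simp at this; first | omega | exact Fin.ext (by omega))
  · rintro ⟨j, hj⟩
    by_cases hjl : (j : ℕ) = K - 1
    · have hy : (y : ℕ) < K - 1 := by
        have : (y : ℕ) ≠ K - 1 := fun h => hj (Fin.ext (by omega))
        omega
      refine ⟨⟨y, hy⟩, ?_⟩
      simp [mY, Fin.ext_iff, hjl]
    · have hjlt : (j : ℕ) < K - 1 := by omega
      refine ⟨⟨j, hjlt⟩, ?_⟩
      have : (j : ℕ) ≠ (y : ℕ) := fun h => hj (Fin.ext h)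
      simp [mY, this, Fin.ext_iff]

noncomputable def eY (K : ℕ) (hK : 2 ≤ K) (y : Fin K) : Fin (K-1) ≃ {j : Fin K // j ≠ y} :=
  Equiv.ofBijective _ (mY_bij K hK y)

lemma key (K : ℕ) (hK : 2 ≤ K) (y : Fin K) (v : Fin K → ℝ) (i : Fin (K-1)) :
    ((Ups K y * Dmat K) *ᵥ v) i = v y - v (mY K hK y i) := by
  rw [← mulVec_mulVec]
  have hD : ∀ i' : Fin (K-1), (Dmat K *ᵥ v) i' = v ⟨K-1, by omega⟩ - v ⟨i', by omega⟩ := by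
    intro i'
    have hne : (⟨K-1, by omega⟩ : Fin K) ≠ ⟨i', by omega⟩ := by
      intro h; have := congrArg Fin.val h; simp at this; omega
    simp only [mulVec, dotProduct, Dmat, Matrix.of_apply]
    calc ∑ j : Fin K, (if (j:ℕ) = K-1 then (1:ℝ) else if (j:ℕ) = (i':ℕ) then -1 else 0) * v j
        = ∑ j, (if j = (⟨K-1, by omega⟩ : Fin K) then (1:ℝ)
            else if j = ⟨i', by omega⟩ then -1 else 0) * v j :=
          Finset.sum_congr rfl (fun j _ => by simp [Fin.ext_iff])
      _ = 1 * v ⟨K-1, by omega⟩ + (-1) * v ⟨i', by omega⟩ := sum_two _ _ hne v 1 (-1)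
      _ = v ⟨K-1, by omega⟩ - v ⟨i', by omega⟩ := by ring
  set w := Dmat K *ᵥ v with hw
  simp only [mulVec, dotProduct, Ups, Matrix.of_apply]
  by_cases hy : (y : ℕ) = K - 1
  · simp only [hy, if_true]
    have hs : (∑ j, (if i = j then (1:ℝ) else 0) * w j) = w i := by
      simp [Finset.sum_ite_eq]
    have h1 : mY K hK y i = ⟨i, by omega⟩ := by
      have : (i : ℕ) ≠ (y : ℕ) := by omega
      simp [mY, this]
    have h2 : y = ⟨K-1, by omega⟩ := Fin.ext hy
    rw [hs, hD i, h1, congrArg v h2]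
  · simp only [hy, if_false]
    have hylt : (y : ℕ) < K - 1 := by omega
    set y' : Fin (K-1) := ⟨y, hylt⟩ with hy'
    have hvy : v ⟨(y' : ℕ), by omega⟩ = v y := congrArg v (Fin.ext rfl)
    by_cases hiy : i = y'
    · have hs : (∑ j : Fin (K-1), (if (j:ℕ) = (y:ℕ) then (-1:ℝ) else if i = j then 1 else 0) * w j)
          = - w y' := by
        calc ∑ j : Fin (K-1), (if (j:ℕ) = (y:ℕ) then (-1:ℝ) else if i = j then 1 else 0) * w j
            = ∑ j, (if j = y' then (-1:ℝ) else 0) * w j := by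
              refine Finset.sum_congr rfl (fun j _ => ?_)
              by_cases h : (j:ℕ) = (y:ℕ)
              · simp [h, show j = y' from Fin.ext h, show ((y' : ℕ) = y) from rfl]
              · have h1 : j ≠ y' := fun he => h (congrArg Fin.val he)
                have h2 : i ≠ j := fun he => h1 (by rw [← he, hiy])
                simp [h, h1, h2]
          _ = - w y' := by simp [Finset.sum_ite_eq']
      rw [hs, hD y']
      have h1 : mY K hK y i = ⟨K-1, by omega⟩ := by
        subst hiy; simp [mY, show ((y' : ℕ) = y) from rfl]
      rw [h1, hvy]; ring
    · have hs : (∑ j : Fin (K-1), (if (j:ℕ) = (y:ℕ) then (-1:ℝ) else if i = j then 1 else 0) * w j)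
          = w i - w y' := by
        have hne : y' ≠ i := Ne.symm hiy
        calc ∑ j : Fin (K-1), (if (j:ℕ) = (y:ℕ) then (-1:ℝ) else if i = j then 1 else 0) * w j
            = ∑ j, (if j = y' then (-1:ℝ) else if j = i then 1 else 0) * w j := by
              refine Finset.sum_congr rfl (fun j _ => ?_)
              by_cases h : (j:ℕ) = (y:ℕ)
              · simp [h, show j = y' from Fin.ext h, show ((y' : ℕ) = y) from rfl]
              · have h1 : ¬ j = y' := fun he => h (congrArg Fin.val he)
                simp [h, h1, eq_comm]
          _ = (-1) * w y' + 1 * w i := sum_two y' i hne w (-1) 1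
          _ = w i - w y' := by ring
      rw [hs, hD i, hD y', hvy]
      have h1 : mY K hK y i = ⟨i, by omega⟩ := by
        have : (i : ℕ) ≠ (y : ℕ) := fun h => hiy (Fin.ext h)
        simp [mY, this]
      rw [h1]; ring

/-- A multiclass loss defined from a symmetric template via the relative margin form
is permutation equivariant. -/
theorem stmt0 (K : ℕ) (hK : 2 ≤ K) (ψ : (Fin (K-1) → ℝ) → ℝ)
    (hsym : ∀ (τ : Equiv.Perm (Fin (K-1))) (u : Fin (K-1) → ℝ), ψ (u ∘ τ) = ψ u)
    (L : (Fin K → ℝ) → Fin K → ℝ)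
    (hL : ∀ (v : Fin K → ℝ) (y : Fin K), L v y = ψ ((Ups K y * Dmat K) *ᵥ v)) :
    ∀ (σ : Equiv.Perm (Fin K)) (v : Fin K → ℝ),
      L (Smat σ *ᵥ v) = Smat σ *ᵥ (L v) := by
  intro σ v
  funext y
  -- permutation on complements
  have hpq : ∀ j : Fin K, j ≠ y ↔ σ j ≠ σ y := fun j =>
    ⟨fun h he => h (σ.injective he), fun h he => h (congrArg σ he)⟩
  set τ : Equiv.Perm (Fin (K-1)) :=
    (eY K hK y).trans ((σ.subtypeEquiv hpq).trans (eY K hK (σ y)).symm) with hτ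
  have hτapp : ∀ i, mY K hK (σ y) (τ i) = σ (mY K hK y i) := by
    intro i
    have h1 : (eY K hK (σ y)) (τ i) = ⟨σ (mY K hK y i), (hpq _).mp (mY_ne K hK y i)⟩ := by
      have h2 : τ i = (eY K hK (σ y)).symm ((σ.subtypeEquiv hpq) ((eY K hK y) i)) := rfl
      rw [h2, Equiv.apply_symm_apply]
      rfl
    exact congrArg Subtype.val h1
  have lhs : L (Smat σ *ᵥ v) y = ψ (fun i => v (σ y) - v (σ (mY K hK y i))) := by
    rw [hL]
    congr 1
    funext i
    rw [key K hK y _ i, Smat_mulVec, Smat_mulVec]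
  have rhs : (Smat σ *ᵥ L v) y = ψ (fun i => v (σ y) - v (mY K hK (σ y) i)) := by
    rw [Smat_mulVec, hL]
    congr 1
    funext i
    rw [key K hK (σ y) v i]
  rw [lhs, rhs]
  rw [← hsym τ (fun i => v (σ y) - v (mY K hK (σ y) i))]
  congr 1
  funext i
  simp [Function.comp, hτapp i]
end

section
/- Let f : ℝ^n → ℝ be convex, symmetric (invariant under permutations of coordinates), and differentiable. For any C ∈ ℝ and x ∈ ℝ^n, define x ∨ C ∈ ℝ^n by (x ∨ C)_i = max(x_i, C). Then for every index i achieving the minimum entry of x (i.e., x_i = min_j x_j), we have ∂f/∂x_i(x) ≤ ∂f/∂x_i(x ∨ C). -/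
/-!
Put `y = x ∨ C` and `d = y - x ≥ 0`. For a symmetric convex `f`, partial derivatives are ordered
like the coordinates (compare `x` with `x ∘ swap i j` by monotonicity of the gradient), so
`(∑ d) ∂ᵢf(x) ≤ ⟨∇f(x), d⟩` since `xᵢ` is minimal. Monotonicity of the gradient gives
`⟨∇f(x), d⟩ ≤ ⟨∇f(y), d⟩`, and `d` is supported where `y` equals `C = yᵢ`, at which coordinates
all partial derivatives of `f` at `y` agree with `∂ᵢf(y)`; hence `⟨∇f(y), d⟩ = (∑ d) ∂ᵢf(y)`.
-/

open Function Set

theorem ConvexOn.fderiv_apply_sub_le {E : Type*} [NormedAddCommGroup E] [NormedSpace ℝ E]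
    {s : Set E} {f : E → ℝ} (hf : ConvexOn ℝ s f) {a b : E} (ha : a ∈ s) (hb : b ∈ s)
    (hfa : DifferentiableAt ℝ f a) (hfb : DifferentiableAt ℝ f b) :
    fderiv ℝ f a (b - a) ≤ fderiv ℝ f b (b - a) := by
  set ℓ : ℝ →ᵃ[ℝ] E := AffineMap.lineMap a b
  have hg : ConvexOn ℝ (Icc 0 1) (f ∘ ℓ) :=
    (hf.comp_affineMap ℓ).subset (fun _ ht => hf.1.lineMap_mem ha hb ht) (convex_Icc 0 1)
  have hg' : ∀ t, DifferentiableAt ℝ f (ℓ t) →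
      HasDerivAt (f ∘ ℓ) (fderiv ℝ f (ℓ t) (b - a)) t := fun t h =>
    h.hasFDerivAt.comp_hasDerivAt t AffineMap.hasDerivAt_lineMap
  have h0 := hg' 0 (by simpa [ℓ] using hfa)
  have h1 := hg' 1 (by simpa [ℓ] using hfb)
  have := (hg.deriv_le_slope (by simp) (by simp) one_pos h0.differentiableAt).trans
    (hg.slope_le_deriv (by simp) (by simp) one_pos h1.differentiableAt)
  simpa [h0.deriv, h1.deriv, ℓ] using this

theorem ContinuousLinearMap.apply_eq_sum_mul_single {ι : Type*} [Fintype ι] [DecidableEq ι]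
    (L : (ι → ℝ) →L[ℝ] ℝ) (v : ι → ℝ) : L v = ∑ j, v j * L (Pi.single j 1) := by
  conv_lhs => rw [← Finset.univ_sum_single v, map_sum]
  refine Finset.sum_congr rfl fun j _ => ?_
  rw [← smul_eq_mul, ← map_smul, ← Pi.single_smul, smul_eq_mul, mul_one]

theorem comp_swap_eq_self {ι α : Type*} [DecidableEq ι] {x : ι → α} {i j : ι} (h : x i = x j) :
    x ∘ Equiv.swap i j = x := by
  funext k
  simp only [comp_apply, Equiv.swap_apply_def]
  split_ifs <;> simp_all

theorem sub_comp_swap_eq_smul {ι : Type*} [DecidableEq ι] (x : ι → ℝ) (i j : ι) :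
    x - x ∘ Equiv.swap i j = (x i - x j) • (Pi.single i 1 - Pi.single j 1) := by
  funext k
  simp only [Pi.sub_apply, comp_apply, Pi.smul_apply, Pi.single_apply, Equiv.swap_apply_def,
    smul_eq_mul]
  split_ifs <;> simp_all

section Symmetric

variable {ι : Type*} {f : (ι → ℝ) → ℝ}

theorem lineDeriv_comp_perm (hsym : ∀ (σ : Equiv.Perm ι) (x : ι → ℝ), f (x ∘ σ) = f x)
    (σ : Equiv.Perm ι) (x v : ι → ℝ) :
    lineDeriv ℝ f (x ∘ σ) (v ∘ σ) = lineDeriv ℝ f x v := by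
  simp only [lineDeriv]
  congr 1
  funext t
  exact hsym σ (x + t • v)

variable [Fintype ι]

theorem fderiv_comp_perm (hdiff : Differentiable ℝ f)
    (hsym : ∀ (σ : Equiv.Perm ι) (x : ι → ℝ), f (x ∘ σ) = f x)
    (σ : Equiv.Perm ι) (x v : ι → ℝ) :
    fderiv ℝ f (x ∘ σ) (v ∘ σ) = fderiv ℝ f x v := by
  rw [← (hdiff _).lineDeriv_eq_fderiv, ← (hdiff _).lineDeriv_eq_fderiv, lineDeriv_comp_perm hsym]

variable [DecidableEq ι]

theorem fderiv_single_eq_of_apply_eq (hdiff : Differentiable ℝ f)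
    (hsym : ∀ (σ : Equiv.Perm ι) (x : ι → ℝ), f (x ∘ σ) = f x)
    {x : ι → ℝ} {i j : ι} (h : x i = x j) :
    fderiv ℝ f x (Pi.single i 1) = fderiv ℝ f x (Pi.single j 1) := by
  have := fderiv_comp_perm hdiff hsym (Equiv.swap i j) x (Pi.single i 1)
  rwa [comp_swap_eq_self h, Pi.single_comp_equiv, Equiv.symm_swap, Equiv.swap_apply_left,
    eq_comm] at this

/-- The Schur–Ostrowski condition. -/
theorem sub_mul_fderiv_single_sub_nonneg (hconv : ConvexOn ℝ univ f)
    (hdiff : Differentiable ℝ f) (hsym : ∀ (σ : Equiv.Perm ι) (x : ι → ℝ), f (x ∘ σ) = f x)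
    (x : ι → ℝ) (i j : ι) :
    0 ≤ (x i - x j) * (fderiv ℝ f x (Pi.single i 1) - fderiv ℝ f x (Pi.single j 1)) := by
  set x' := x ∘ Equiv.swap i j
  have hmono : fderiv ℝ f x' (x - x') ≤ fderiv ℝ f x (x - x') :=
    hconv.fderiv_apply_sub_le trivial trivial (hdiff _) (hdiff _)
  have hswap : fderiv ℝ f x' (x - x') = -fderiv ℝ f x (x - x') := by
    have h := fderiv_comp_perm hdiff hsym (Equiv.swap i j) x' (x - x')
    have hx' : x' ∘ Equiv.swap i j = x := by funext k; simp [x']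
    rw [← h, Pi.sub_comp, hx', ← map_neg, neg_sub]
  have hnonneg : 0 ≤ fderiv ℝ f x (x - x') := by linarith
  rwa [sub_comp_swap_eq_smul, map_smul, map_sub, smul_eq_mul] at hnonneg

theorem fderiv_single_le_of_apply_le (hconv : ConvexOn ℝ univ f)
    (hdiff : Differentiable ℝ f) (hsym : ∀ (σ : Equiv.Perm ι) (x : ι → ℝ), f (x ∘ σ) = f x)
    {x : ι → ℝ} {i j : ι} (h : x i ≤ x j) :
    fderiv ℝ f x (Pi.single i 1) ≤ fderiv ℝ f x (Pi.single j 1) := by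
  rcases h.eq_or_lt with heq | hlt
  · exact (fderiv_single_eq_of_apply_eq hdiff hsym heq).le
  · nlinarith [sub_mul_fderiv_single_sub_nonneg hconv hdiff hsym x i j]

theorem sum_mul_fderiv_single_le_of_isMin (hconv : ConvexOn ℝ univ f)
    (hdiff : Differentiable ℝ f) (hsym : ∀ (σ : Equiv.Perm ι) (x : ι → ℝ), f (x ∘ σ) = f x)
    {x : ι → ℝ} {i : ι} (hi : ∀ j, x i ≤ x j) {d : ι → ℝ} (hd : 0 ≤ d) :
    (∑ j, d j) * fderiv ℝ f x (Pi.single i 1) ≤ fderiv ℝ f x d := by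
  rw [Finset.sum_mul, (fderiv ℝ f x).apply_eq_sum_mul_single d]
  exact Finset.sum_le_sum fun j _ =>
    mul_le_mul_of_nonneg_left (fderiv_single_le_of_apply_le hconv hdiff hsym (hi j)) (hd j)

theorem fderiv_eq_sum_mul_fderiv_single (hdiff : Differentiable ℝ f)
    (hsym : ∀ (σ : Equiv.Perm ι) (x : ι → ℝ), f (x ∘ σ) = f x)
    {y d : ι → ℝ} {i : ι} (hd : ∀ j, d j ≠ 0 → y j = y i) :
    fderiv ℝ f y d = (∑ j, d j) * fderiv ℝ f y (Pi.single i 1) := by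
  rw [Finset.sum_mul, (fderiv ℝ f y).apply_eq_sum_mul_single d]
  refine Finset.sum_congr rfl fun j _ => ?_
  rcases eq_or_ne (d j) 0 with hj | hj
  · simp [hj]
  · rw [fderiv_single_eq_of_apply_eq hdiff hsym (hd j hj)]

end Symmetric

/-- The gradient-boosting monotonicity property of symmetric convex differentiable
functions: if `i` attains the minimum entry of `x`, then
`∂f/∂x_i(x) ≤ ∂f/∂x_i(x ∨ C)` where `(x ∨ C)_j = max(x_j, C)`. -/
theorem stmt14 (n : ℕ) (f : (Fin n → ℝ) → ℝ)
    (hconv : ConvexOn ℝ Set.univ f) (hdiff : Differentiable ℝ f)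
    (hsym : ∀ (σ : Equiv.Perm (Fin n)) (x : Fin n → ℝ), f (x ∘ σ) = f x)
    (C : ℝ) (x : Fin n → ℝ) (i : Fin n) (hi : ∀ j, x i ≤ x j) :
    fderiv ℝ f x (Pi.single i 1)
      ≤ fderiv ℝ f (fun j => max (x j) C) (Pi.single i 1) := by
  set y : Fin n → ℝ := fun j => max (x j) C
  rcases le_or_gt C (x i) with hC | hC
  · have hyx : y = x := funext fun j => max_eq_left (hC.trans (hi j))
    rw [hyx]
  set d := y - x
  have hd : 0 ≤ d := fun j => sub_nonneg.2 (le_max_left _ _)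
  have hsupp : ∀ j, d j ≠ 0 → y j = y i := fun j hj => by
    have hxj : x j < C := by by_contra! h; simp [d, y, max_eq_left h] at hj
    simp [y, hxj.le, hC.le]
  have hsum : 0 < ∑ j, d j :=
    (show 0 < d i by simpa [d, y] using hC).trans_le
      (Finset.single_le_sum (fun j _ => hd j) (Finset.mem_univ i))
  refine le_of_mul_le_mul_left ?_ hsum
  calc (∑ j, d j) * fderiv ℝ f x (Pi.single i 1)
      ≤ fderiv ℝ f x d := sum_mul_fderiv_single_le_of_isMin hconv hdiff hsym hi hd
    _ ≤ fderiv ℝ f y d := hconv.fderiv_apply_sub_le trivial trivial (hdiff x) (hdiff y)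
    _ = (∑ j, d j) * fderiv ℝ f y (Pi.single i 1) :=
      fderiv_eq_sum_mul_fderiv_single hdiff hsym hsupp
end
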